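/- arXiv:2107.00453 — 3 statements merged into one kernel-verified Lean document; each statement's English description precedes it below -/
import Mathlib

section
/- Let λ, μ be partitions with μ ⊆ λ, let i_j < i_k be row indices as above. Then ∏_{q=μ_{i_k}+1}^{λ_{i_k}} [(λ_{i_j}−q)α + i_k − i_j + 1] / [(μ_{i_j}−q)α + i_k − i_j + 1] = ∏_{p=μ_{i_j}+1}^{λ_{i_j}} [(p−μ_{i_k}−1)α + i_k − i_j + 1] / [(p−λ_{i_k}−1)α + i_k − i_j + 1], as rational functions in α. -/
open scoped Classical
open Finset

noncomputable section

/-- A partition: an antitone, eventually-zero sequence of naturals.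
`part i` is the `(i+1)`-st part (0-indexed). -/
structure JPartition where
  part : ℕ → ℕ
  antitone' : Antitone part
  finite' : ∃ N, ∀ n, N ≤ n → part n = 0

namespace JPartition

/-- The size `|λ|` of a partition. -/
def size (l : JPartition) : ℕ := ∑ᶠ i, l.part i

/-- The length (number of nonzero parts). -/
def length (l : JPartition) : ℕ := Nat.card {i | 0 < l.part i}

/-- The multiplicity of `k` as a part. -/
def mult (l : JPartition) (k : ℕ) : ℕ := Nat.card {i | l.part i = k}

/-- The parts of the conjugate (transposed) partition. -/
def conjPart (l : JPartition) (j : ℕ) : ℕ := Nat.card {i | j < l.part i}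

lemma finite_set (l : JPartition) (j : ℕ) : {i | j < l.part i}.Finite := by
  obtain ⟨N, hN⟩ := l.finite'
  refine Set.Finite.subset (Set.finite_Iio N) ?_
  intro i hi
  simp only [Set.mem_setOf_eq] at hi
  by_contra hc
  simp only [Set.mem_Iio, not_lt] at hc
  have := hN i hc
  omega

/-- The conjugate (transposed) partition. -/
def conj (l : JPartition) : JPartition where
  part := l.conjPart
  antitone' := by
    intro a b hab
    exact Nat.card_mono (l.finite_set a) (fun i hi => lt_of_le_of_lt hab hi)
  finite' := by
    refine ⟨l.part 0 + 1, fun n hn => ?_⟩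
    have he : {i | n < l.part i} = (∅ : Set ℕ) := by
      ext i
      simp only [Set.mem_setOf_eq, Set.mem_empty_iff_false, iff_false, not_lt]
      calc l.part i ≤ l.part 0 := l.antitone' (Nat.zero_le i)
        _ ≤ n := by omega
    unfold conjPart
    rw [he]
    simp

/-- The arm of the (0-indexed) box `s = (i,j)` of `λ`. -/
def arm (l : JPartition) (s : ℕ × ℕ) : ℤ := (l.part s.1 : ℤ) - s.2 - 1

/-- The leg of the (0-indexed) box `s = (i,j)` of `λ`. -/
def leg (l : JPartition) (s : ℕ × ℕ) : ℤ := (l.conjPart s.2 : ℤ) - s.1 - 1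

/-- Containment of partitions: `m ⊆ l`. -/
def sub (m l : JPartition) : Prop := ∀ i, m.part i ≤ l.part i

/-- Dominance order on partitions (of the same size). -/
def domLE (m l : JPartition) : Prop :=
  m.size = l.size ∧ ∀ k, ∑ i ∈ Finset.range k, m.part i ≤ ∑ i ∈ Finset.range k, l.part i

end JPartition

/-- The rectangular partition `(b^h)`. -/
def rect (b h : ℕ) : JPartition where
  part := fun i => if i < h then b else 0
  antitone' := by
    intro x y hxy
    by_cases hy : y < h
    · have hx : x < h := lt_of_le_of_lt hxy hy
      simp [hx, hy]
    · simp [hy]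
  finite' := ⟨h, fun n hn => if_neg (by omega)⟩

/-- The rotated complement of `λ` inside the rectangle `(b^h)`. -/
def rotC (b h : ℕ) (l : JPartition) : JPartition where
  part := fun i => if i < h then b - l.part (h - 1 - i) else 0
  antitone' := by
    intro x y hxy
    by_cases hy : y < h
    · have hx : x < h := lt_of_le_of_lt hxy hy
      simp only [if_pos hx, if_pos hy]
      exact Nat.sub_le_sub_left (l.antitone' (show h - 1 - y ≤ h - 1 - x by omega)) b
    · simp [hy]
  finite' := ⟨h, fun n hn => if_neg (by omega)⟩

/-- The empty partition. -/
def emptyP : JPartition := ⟨fun _ => 0, fun _ _ _ => le_rfl, ⟨0, fun _ _ => rfl⟩⟩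

/-- The field `ℚ(α)` of rational functions in the Jack parameter. -/
abbrev K : Type := RatFunc ℚ

/-- The Jack parameter `α`, an indeterminate. -/
def alpha : K := RatFunc.X

/-- Product of `f` over all boxes of the partition `l`. -/
def boxProdM {M : Type*} [CommMonoid M] (l : JPartition) (f : ℕ × ℕ → M) : M :=
  ∏ᶠ i, ∏ j ∈ Finset.range (l.part i), f (i, j)

/-- Number of boxes of `l` satisfying `f`. -/
def boxCount (l : JPartition) (f : ℕ × ℕ → Prop) : ℕ :=
  ∑ᶠ i, ∑ j ∈ Finset.range (l.part i), if f (i, j) then 1 else 0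

/-- `c_{λ,s}(α) = a_{λ,s} α + ℓ_{λ,s} + 1`. -/
def cBox (l : JPartition) (s : ℕ × ℕ) : K := (l.arm s : K) * alpha + (l.leg s : K) + 1

/-- `c'_{λ,s}(α) = (a_{λ,s}+1) α + ℓ_{λ,s}`. -/
def cBox' (l : JPartition) (s : ℕ × ℕ) : K := ((l.arm s : K) + 1) * alpha + (l.leg s : K)

/-- `c_λ(α)`. -/
def cFun (l : JPartition) : K := boxProdM l (cBox l)

/-- `c'_λ(α)`. -/
def cFun' (l : JPartition) : K := boxProdM l (cBox' l)

/-- `c_λ(t)` evaluated at an arbitrary `t`. -/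
def cFunAt (l : JPartition) (t : K) : K :=
  boxProdM l (fun s => (l.arm s : K) * t + (l.leg s : K) + 1)

/-- `c_{μ,λ}(α) = ∏_{s∈μ} (a_{μ,s} α + ℓ_{λ,s} + 1)`. -/
def cMix (m l : JPartition) : K :=
  boxProdM m (fun s => (m.arm s : K) * alpha + (l.leg s : K) + 1)

/-- `c_{μ,λ}(t)` at an arbitrary `t`. -/
def cMixAt (m l : JPartition) (t : K) : K :=
  boxProdM m (fun s => (m.arm s : K) * t + (l.leg s : K) + 1)

/-- `c'_{λ,μ}(α) = ∏_{s∈μ} ((a_{λ,s}+1) α + ℓ_{μ,s})`. -/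
def cMix' (l m : JPartition) : K :=
  boxProdM m (fun s => ((l.arm s : K) + 1) * alpha + (m.leg s : K))

/-- The ring in which symmetric functions live: formal power series in
countably many variables over `ℚ(α)`. -/
abbrev SymF : Type := MvPowerSeries ℕ K

/-- The monomial symmetric function `m_λ`. -/
def msf (l : JPartition) : SymF :=
  fun e => if ∀ k, 0 < k → Nat.card {i | e i = k} = l.mult k then 1 else 0

/-- The power sum symmetric function `p_r`. -/
def psf (r : ℕ) : SymF :=
  fun e => if ∃ i, e = Finsupp.single i r then 1 else 0

/-- The power sum symmetric function `p_λ = ∏ p_{λ_i}`. -/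
def pProd (l : JPartition) : SymF :=
  ∏ᶠ i, if l.part i = 0 then 1 else psf (l.part i)

/-- `z_λ = ∏_k k^{m_k} m_k!`. -/
def zNum (l : JPartition) : ℕ :=
  ∏ᶠ k, if 0 < k then k ^ l.mult k * (l.mult k).factorial else 1

/-- `u_λ = ∏_k m_k!`. -/
def uNum (l : JPartition) : ℕ :=
  ∏ᶠ k, if 0 < k then (l.mult k).factorial else 1

/-- `x ∈ ℚ(α)` is a polynomial in `α` with nonnegative integer coefficients. -/
def IsNonnegPoly (x : K) : Prop :=
  ∃ P : Polynomial ℕ, x = algebraMap (Polynomial ℚ) K (P.map (Nat.castRingHom ℚ))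

/-- The data of the Jack symmetric functions at parameter `t`: a symmetric
bilinear form with `⟨p_λ,p_μ⟩ = δ_{λμ} z_λ t^{ℓ(λ)}`, and the family `J_λ`,
pairwise orthogonal, triangular with respect to the monomial symmetric
functions in dominance order, normalized by `v_{λ,(1^n)} = n!`. -/
structure JackFamily (t : K) where
  inner : SymF →ₗ[K] SymF →ₗ[K] K
  inner_symm : ∀ f g, inner f g = inner g f
  inner_p : ∀ l m : JPartition,
    inner (pProd l) (pProd m) = if l = m then (zNum l : K) * t ^ l.length else 0
  J : JPartition → SymF
  v : JPartition → JPartition → K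
  J_eq : ∀ l, J l = ∑ᶠ m : JPartition, v l m • msf m
  v_tri : ∀ l m, v l m ≠ 0 → JPartition.domLE m l
  v_norm : ∀ l : JPartition, v l (rect 1 l.size) = (Nat.factorial l.size : K)
  orth : ∀ l m, l ≠ m → inner (J l) (J m) = 0

/-- The Jack family together with the skew Jack symmetric functions
`J_{λ/μ}`, characterized by `⟨J_{λ/μ}, J_ν⟩ = ⟨J_λ, J_μ J_ν⟩`, lying in the
span of the `J_ν`, with monomial expansion coefficients `vskew`. -/
structure JackSystem (t : K) extends JackFamily t where
  skewJ : JPartition → JPartition → SymF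
  vskew : JPartition → JPartition → JPartition → K
  skew_eq : ∀ l m, skewJ l m = ∑ᶠ n : JPartition, vskew l m n • msf n
  skew_def : ∀ l m n, inner (skewJ l m) (J n) = inner (J l) (J m * J n)
  skew_mem : ∀ l m, skewJ l m ∈ Submodule.span K (Set.range J)

/-- Stanley's polynomial `g^λ_{μν} = ⟨J_λ, J_μ J_ν⟩`. -/
def gpoly {t : K} (D : JackFamily t) (l m n : JPartition) : K :=
  D.inner (D.J l) (D.J m * D.J n)

/-- The set of boxes of the skew diagram `λ/μ` in the plane `ℤ × ℤ`. -/
def skewSet (l m : JPartition) : Set (ℤ × ℤ) :=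
  {s | 0 ≤ s.1 ∧ 0 ≤ s.2 ∧ m.part s.1.toNat ≤ s.2.toNat ∧ s.2.toNat < l.part s.1.toNat}

/-- The diagrams of `λ/μ` and `λ̃/μ̃` coincide up to translation. -/
def SameUpToTranslation (l m tl tm : JPartition) : Prop :=
  ∃ d : ℤ × ℤ, skewSet tl tm = (fun s => s + d) '' skewSet l m
section Telescope

variable {G : Type*} [CommGroup G]

theorem Finset.prod_Ioc_div_sub_one (g : ℤ → G) {m n : ℕ} (hmn : m ≤ n) :
    ∏ i ∈ Ioc m n, g i / g (i - 1) = g n / g m := by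
  induction n, hmn using Nat.le_induction with
  | base => simp
  | succ n hmn ih =>
    rw [Finset.prod_Ioc_succ_top (by omega), ih]
    push_cast
    rw [add_sub_cancel_right, mul_comm, div_mul_div_cancel]

/-- Both sides equal the product of `f (p - q) / f (p - q - 1)` over the rectangle
`(ma, la] × (mb, lb]`, telescoped in `p` on the left and in `q` on the right. -/
theorem prod_Ioc_div_eq_prod_Ioc_div (f : ℤ → G) {ma la mb lb : ℕ} (ha : ma ≤ la)
    (hb : mb ≤ lb) :
    ∏ q ∈ Ioc mb lb, f (la - q) / f (ma - q) =
      ∏ p ∈ Ioc ma la, f (p - mb - 1) / f (p - lb - 1) := by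
  calc ∏ q ∈ Ioc mb lb, f (la - q) / f (ma - q)
      = ∏ q ∈ Ioc mb lb, ∏ p ∈ Ioc ma la, f (p - q) / f (p - q - 1) := by
        refine prod_congr rfl fun q _ => ?_
        rw [← prod_Ioc_div_sub_one (fun p => f (p - q)) ha]
        simp only [sub_right_comm]
    _ = ∏ p ∈ Ioc ma la, ∏ q ∈ Ioc mb lb, f (p - q) / f (p - q - 1) := prod_comm
    _ = ∏ p ∈ Ioc ma la, f (p - mb - 1) / f (p - lb - 1) := by
        refine prod_congr rfl fun p _ => ?_
        have hshift : ∀ q : ℤ, (p : ℤ) - (q - 1) - 1 = p - q := fun q => by ring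
        rw [← inv_div_inv, ← prod_Ioc_div_sub_one (fun q => (f (p - q - 1))⁻¹) hb]
        simp only [inv_div_inv, hshift]

end Telescope

theorem intCast_mul_alpha_add_intCast_ne_zero (x : ℤ) {c : ℤ} (hc : c ≠ 0) :
    (x : K) * alpha + c ≠ 0 := by
  intro h
  have hpoly : (Polynomial.C (x : ℚ) * Polynomial.X + Polynomial.C (c : ℚ) : Polynomial ℚ) = 0 := by
    apply RatFunc.algebraMap_injective ℚ
    simpa [alpha, RatFunc.algebraMap_C, RatFunc.algebraMap_X] using h
  exact hc (by simpa using congrArg (Polynomial.coeff · 0) hpoly)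

-- Rows are 0-indexed, so the paper's `i_k - i_j` is `b - a`.
/-- Lemma on products of linear factors: for rows `a < b` (0-indexed, so the
paper's `i_k - i_j = b - a`) of partitions `μ ⊆ λ`,
`∏_{q=μ_b+1}^{λ_b} [(λ_a−q)α + (b−a) + 1]/[(μ_a−q)α + (b−a) + 1]
 = ∏_{p=μ_a+1}^{λ_a} [(p−μ_b−1)α + (b−a) + 1]/[(p−λ_b−1)α + (b−a) + 1]`. -/
theorem stmt3 (l m : JPartition) (a b : ℕ) (hab : a < b) (hsub : m.sub l) :
    ∏ q ∈ Finset.Icc (m.part b + 1) (l.part b),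
      (((l.part a - q : ℤ) : K) * alpha + ((b - a + 1 : ℤ) : K)) /
        (((m.part a - q : ℤ) : K) * alpha + ((b - a + 1 : ℤ) : K)) =
    ∏ p ∈ Finset.Icc (m.part a + 1) (l.part a),
      (((p - m.part b - 1 : ℤ) : K) * alpha + ((b - a + 1 : ℤ) : K)) /
        (((p - l.part b - 1 : ℤ) : K) * alpha + ((b - a + 1 : ℤ) : K)) := by
  set c : ℤ := b - a + 1
  have hc : c ≠ 0 := by omega
  let F : ℤ → Kˣ := fun x => Units.mk0 ((x : K) * alpha + c)
    (intCast_mul_alpha_add_intCast_ne_zero x hc)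
  have key := congrArg Units.val
    (prod_Ioc_div_eq_prod_Ioc_div F (hsub a) (hsub b))
  simpa only [Finset.Icc_add_one_left_eq_Ioc, Units.coe_prod, Units.val_div_eq_div_val, F,
    Units.val_mk0] using key

end
end

section
/- Let β = (b^h) be the rectangular partition with h parts equal to b, and for a partition λ ⊆ β define its rotated complement λ̂ = (b−λ_h, b−λ_{h−1}, …, b−λ_1). Then for any μ ⊆ λ ⊆ β, we have c_{μ,λ}(α) / c_{μ,β}(α) = c_{λ̂,μ̂}(α) / c_{λ̂,β}(α), where c_{μ,λ}(α) = ∏_{s∈μ} (a_{μ,s}·α + ℓ_{λ,s} + 1). -/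
open scoped Classical
open Finset

noncomputable section

/-! For a box `(i, j)` of `μ` with `A = μ_i - j - 1`, the legs in `λ` and in `β = (b^h)` give the
factor ratio `(Aα + λ'_j - i) / (Aα + h - i)`, which telescopes to the product over the rows
`k < h` with `λ_k ≤ j` of `(Aα + k - i) / (Aα + k - i + 1)`. Regrouping by pairs of rows `(i, k)`
and substituting `t = μ_i - 1 - j`, the ratio `c_{μ,λ} / c_{μ,β}` becomes the product over
`i, k < h` and `t < μ_i - λ_k` of `(tα + k - i) / (tα + k - i + 1)`. Since
`λ̂_{h-1-k} - μ̂_{h-1-i} = μ_i - λ_k`, the half-turn `(i, k) ↦ (h - 1 - k, h - 1 - i)`, which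
preserves `k - i`, shows that the pair `(λ̂, μ̂)` gives the same product. -/

lemma ratCast_mul_alpha_add_ne_zero (a : ℚ) {c : ℚ} (hc : c ≠ 0) : (a : K) * alpha + c ≠ 0 := by
  have hpoly : Polynomial.C a * Polynomial.X + Polynomial.C c ≠ 0 := by
    intro h0
    exact hc (by simpa using congrArg (Polynomial.coeff · 0) h0)
  have := (map_ne_zero_iff _ (IsFractionRing.injective (Polynomial ℚ) K)).2 hpoly
  simpa [alpha] using this

theorem Finset.mul_prod_Ico_add_one {M : Type*} [CommMonoid M] (f : ℕ → M) {a b : ℕ}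
    (hab : a ≤ b) : f a * ∏ k ∈ Ico a b, f (k + 1) = f b * ∏ k ∈ Ico a b, f k := by
  rw [prod_Ico_add', mul_comm (f b), ← prod_Ico_succ_top hab,
    ← prod_eq_prod_Ico_succ_bot (by omega)]

theorem Finset.prod_Ico_reflect_range {M : Type*} [CommMonoid M] (f : ℕ → M) (a n : ℕ) :
    ∏ j ∈ Ico a n, f (n - 1 - j) = ∏ t ∈ range (n - a), f t := by
  rw [prod_Ico_eq_prod_range, ← prod_range_reflect f]
  exact prod_congr rfl fun t ht => by rw [mem_range] at ht; congr 1; omega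

namespace JPartition

lemma conjPart_le_iff (l : JPartition) (j k : ℕ) : l.conjPart j ≤ k ↔ l.part k ≤ j := by
  have card_Iio (n : ℕ) : Nat.card (Set.Iio n) = n := by simp
  unfold conjPart
  constructor
  · intro hk
    by_contra! hc
    have hsub : Set.Iio (k + 1) ⊆ {i | j < l.part i} :=
      fun i hi => hc.trans_le (l.antitone' (Nat.lt_succ_iff.mp hi))
    have := Nat.card_mono (l.finite_set j) hsub
    rw [card_Iio] at this
    omega
  · intro hk
    have hsub : {i | j < l.part i} ⊆ Set.Iio k := fun i hi => Set.mem_Iio.mpr <| by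
      by_contra! hik
      exact (hk.trans_lt hi).not_ge (l.antitone' hik)
    simpa [card_Iio] using Nat.card_mono (Set.finite_Iio k) hsub

lemma part_eq_zero_of_le {l : JPartition} {h i : ℕ} (hl : l.part h = 0) (hi : h ≤ i) :
    l.part i = 0 :=
  Nat.eq_zero_of_le_zero (hl ▸ l.antitone' hi)

lemma sub_trans {m l n : JPartition} (hml : m.sub l) (hln : l.sub n) : m.sub n :=
  fun i => (hml i).trans (hln i)

end JPartition

open JPartition

lemma rect_conjPart {b j : ℕ} (h : ℕ) (hj : j < b) : (rect b h).conjPart j = h :=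
  eq_of_forall_ge_iff fun c => by rw [conjPart_le_iff]; simp only [rect]; split_ifs <;> omega

lemma part_le_of_sub_rect {m : JPartition} {b h : ℕ} (hm : m.sub (rect b h)) (i : ℕ) :
    m.part i ≤ b := by
  have := hm i
  simp only [rect] at this
  split_ifs at this <;> omega

lemma part_eq_zero_of_sub_rect {m : JPartition} {b h : ℕ} (hm : m.sub (rect b h)) :
    m.part h = 0 := by
  simpa [rect] using hm h

lemma rotC_sub {m l : JPartition} (b h : ℕ) (hml : m.sub l) : (rotC b h l).sub (rotC b h m) :=
  fun i => by have := hml (h - 1 - i); simp only [rotC]; split_ifs <;> omega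

lemma rotC_sub_rect (b h : ℕ) (l : JPartition) : (rotC b h l).sub (rect b h) :=
  fun i => by simp only [rotC, rect]; split_ifs <;> omega

lemma cMix_eq_prod_range {m : JPartition} {h : ℕ} (hm : m.part h = 0) (l : JPartition) :
    cMix m l = ∏ i ∈ range h, ∏ j ∈ range (m.part i),
      (((m.part i - 1 - j : ℕ) : K) * alpha + ((l.conjPart j : K) - i)) := by
  unfold cMix boxProdM
  rw [finprod_eq_prod_of_mulSupport_subset (s := range h)]
  · refine prod_congr rfl fun i _ => prod_congr rfl fun j hj => ?_
    rw [mem_range] at hj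
    simp only [arm, leg]
    push_cast [Nat.sub_sub, Nat.cast_sub (show 1 + j ≤ m.part i by omega)]
    ring
  · intro i hi
    by_contra hih
    simp [part_eq_zero_of_le hm (not_lt.mp (by simpa using hih))] at hi

lemma cMix_rect_ne_zero {m : JPartition} {b h : ℕ} (hm : m.sub (rect b h)) :
    cMix m (rect b h) ≠ 0 := by
  rw [cMix_eq_prod_range (part_eq_zero_of_sub_rect hm)]
  refine prod_ne_zero_iff.2 fun i hi => prod_ne_zero_iff.2 fun j hj => ?_
  rw [mem_range] at hi hj
  rw [rect_conjPart h (hj.trans_le (part_le_of_sub_rect hm i))]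
  have := ratCast_mul_alpha_add_ne_zero (m.part i - 1 - j : ℕ) (c := (h : ℚ) - i) (by
    rw [sub_ne_zero]; exact_mod_cast hi.ne')
  simpa using this

/-- For `x = 0` and `x = 1`, the numerator and denominator of `c_{μ,λ} / c_{μ,(b^h)}`. -/
def rowPairProd (h : ℕ) (m l : JPartition) (x : K) : K :=
  ∏ i ∈ range h, ∏ k ∈ range h, ∏ t ∈ range (m.part i - l.part k),
    ((t : K) * alpha + (k - i + x))

lemma rowPairProd_eq_prod_boxes (h : ℕ) (m l : JPartition) (x : K) :
    rowPairProd h m l x = ∏ i ∈ range h, ∏ j ∈ range (m.part i),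
      ∏ k ∈ Ico (l.conjPart j) h, (((m.part i - 1 - j : ℕ) : K) * alpha + (k - i + x)) := by
  refine prod_congr rfl fun i _ => ?_
  rw [prod_comm' (s := range (m.part i)) (t := fun j => Ico (l.conjPart j) h) (t' := range h)
    (s' := fun k => Ico (l.part k) (m.part i))]
  · exact prod_congr rfl fun k _ =>
      (prod_Ico_reflect_range (fun t => (t : K) * alpha + (k - i + x)) _ _).symm
  · intro j k
    simp only [mem_range, mem_Ico, conjPart_le_iff]
    tauto

lemma cMix_mul_rowPairProd_one {m l : JPartition} {b h : ℕ} (hm : m.sub (rect b h))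
    (hl : l.part h = 0) :
    cMix m l * rowPairProd h m l 1 = cMix m (rect b h) * rowPairProd h m l 0 := by
  have hm0 := part_eq_zero_of_sub_rect hm
  rw [cMix_eq_prod_range hm0, cMix_eq_prod_range hm0, rowPairProd_eq_prod_boxes,
    rowPairProd_eq_prod_boxes, ← prod_mul_distrib, ← prod_mul_distrib]
  refine prod_congr rfl fun i _ => ?_
  rw [← prod_mul_distrib, ← prod_mul_distrib]
  refine prod_congr rfl fun j hj => ?_
  rw [mem_range] at hj
  rw [rect_conjPart h (hj.trans_le (part_le_of_sub_rect hm i))]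
  have hv : l.conjPart j ≤ h := (conjPart_le_iff l j h).2 (hl ▸ Nat.zero_le j)
  have := mul_prod_Ico_add_one (fun k : ℕ => ((m.part i - 1 - j : ℕ) : K) * alpha + (k - i)) hv
  simp only [Nat.cast_add, Nat.cast_one, add_zero] at this ⊢
  convert this using 3; ring

lemma rowPairProd_one_ne_zero {m l : JPartition} (hml : m.sub l) (h : ℕ) :
    rowPairProd h m l 1 ≠ 0 := by
  refine prod_ne_zero_iff.2 fun i _ => prod_ne_zero_iff.2 fun k _ =>
    prod_ne_zero_iff.2 fun t ht => ?_
  rw [mem_range] at ht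
  have hik : i ≤ k := by
    by_contra! hki
    have hl := l.antitone' hki.le
    have hml := hml i
    omega
  have := ratCast_mul_alpha_add_ne_zero t (c := (k : ℚ) - i + 1) (by
    have : (i : ℚ) ≤ k := by exact_mod_cast hik
    linarith)
  simpa using this

lemma cMix_div_cMix_rect {m l : JPartition} {b h : ℕ} (hml : m.sub l) (hl : l.sub (rect b h)) :
    cMix m l / cMix m (rect b h) = rowPairProd h m l 0 / rowPairProd h m l 1 := by
  have hm := sub_trans hml hl
  rw [div_eq_div_iff (cMix_rect_ne_zero hm) (rowPairProd_one_ne_zero hml h),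
    cMix_mul_rowPairProd_one hm (part_eq_zero_of_sub_rect hl), mul_comm]

lemma rowPairProd_rotC {m : JPartition} {b h : ℕ} (hm : m.sub (rect b h)) (l : JPartition)
    (x : K) : rowPairProd h (rotC b h l) (rotC b h m) x = rowPairProd h m l x := by
  unfold rowPairProd
  rw [prod_comm, ← prod_range_reflect]
  refine prod_congr rfl fun i hi => ?_
  rw [← prod_range_reflect]
  refine prod_congr rfl fun k hk => ?_
  rw [mem_range] at hi hk
  have hmb := part_le_of_sub_rect hm i
  have hrange : (rotC b h l).part (h - 1 - k) - (rotC b h m).part (h - 1 - i) =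
      m.part i - l.part k := by
    simp only [rotC]
    rw [if_pos (by omega), if_pos (by omega), show h - 1 - (h - 1 - k) = k by omega,
      show h - 1 - (h - 1 - i) = i by omega]
    omega
  rw [hrange]
  refine prod_congr rfl fun t _ => ?_
  push_cast [Nat.sub_sub, Nat.cast_sub (show 1 + k ≤ h by omega),
    Nat.cast_sub (show 1 + i ≤ h by omega)]
  ring

/-- For `μ ⊆ λ ⊆ β = (b^h)` with rotated complements `λ̂ ⊆ μ̂ ⊆ β`:
`c_{μ,λ}(α)/c_{μ,β}(α) = c_{λ̂,μ̂}(α)/c_{λ̂,β}(α)`. -/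
theorem stmt4 (b h : ℕ) (l m : JPartition) (h1 : m.sub l) (h2 : l.sub (rect b h)) :
    cMix m l / cMix m (rect b h) =
      cMix (rotC b h l) (rotC b h m) / cMix (rotC b h l) (rect b h) := by
  have hm := sub_trans h1 h2
  rw [cMix_div_cMix_rect h1 h2, cMix_div_cMix_rect (rotC_sub b h h1) (rotC_sub_rect b h m),
    rowPairProd_rotC hm, rowPairProd_rotC hm]
end
end

section
/- Let β = (b^h) be a rectangular partition and μ ⊆ λ ⊆ β with rotated complements λ̂ ⊆ μ̂ ⊆ β. Then c'_{λ,μ}(α)/c'_{β,μ}(α) = c'_{μ̂,λ̂}(α)/c'_{β,λ̂}(α), where c'_{λ,μ}(α) = ∏_{s∈μ} ((a_{λ,s}+1)α + ℓ_{μ,s}). -/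
open scoped Classical
open Finset

noncomputable section

/-! Write `F(n, c) = ∏_{t=1}^{n} (tα + c)` (`alphaFactorial`). In row `i` of `μ` the boxes
in the columns `μ_{k+1} ≤ j < μ_k` all have leg `k - i`, so together they contribute
`F(λ_i - μ_{k+1}, k - i) / F(λ_i - μ_k, k - i)` to `c'_{λ,μ}`. Hence, for `μ ⊆ λ` with at
most `h` rows,
`c'_{λ,μ} · ∏_{i ≤ k < h} F(λ_i - μ_k, k - i) = ∏_{i < k < h} F(λ_i - μ_k, k - i - 1) · A(λ)`
with `A(λ) = ∏_{i < h} F(λ_i, h - 1 - i)` (`rowProd`). Rotating `(λ, μ)` to `(μ̂, λ̂)` sends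
the pair of rows `(i, k)` to `(h - 1 - k, h - 1 - i)` and leaves both pair products
unchanged, so `c'_{λ,μ} · A(μ̂) = c'_{μ̂,λ̂} · A(λ)`. The theorem is this identity for
`(λ, μ)` divided by its instances for `(β, μ)` and `(λ, ∅)`, where `β̂ = ∅` and `∅̂ = β`. -/

namespace JPartition

lemma part_eq_zero_of_le_s5 {m : JPartition} {h i : ℕ} (hmh : m.part h = 0) (hi : h ≤ i) :
    m.part i = 0 :=
  Nat.eq_zero_of_le_zero (hmh ▸ m.antitone' hi)

lemma conjPart_eq_succ {m : JPartition} {j k : ℕ} (hle : m.part (k + 1) ≤ j) (hlt : j < m.part k) :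
    m.conjPart j = k + 1 := by
  have hset : {i | j < m.part i} = Set.Iio (k + 1) := by
    ext i
    simp only [Set.mem_ofPred_eq, Set.mem_Iio]
    constructor
    · intro hi
      by_contra hk
      exact absurd (hle.trans_lt hi) (not_lt.2 (m.antitone' (not_lt.1 hk)))
    · intro hi
      exact hlt.trans_le (m.antitone' (Nat.le_of_lt_succ hi))
  rw [conjPart, hset, Nat.card_coe_set_eq, Set.ncard_Iio_nat]

lemma sub.trans {l m n : JPartition} (hlm : l.sub m) (hmn : m.sub n) : l.sub n :=
  fun i => (hlm i).trans (hmn i)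

lemma sub_refl (l : JPartition) : l.sub l := fun _ => le_rfl

end JPartition

lemma emptyP_sub (l : JPartition) : emptyP.sub l := fun _ => Nat.zero_le _

lemma rotC_part_of_lt {b h i : ℕ} (l : JPartition) (hi : i < h) :
    (rotC b h l).part i = b - l.part (h - 1 - i) := if_pos hi

lemma rotC_sub_rotC {b h : ℕ} {l m : JPartition} (hml : m.sub l) :
    (rotC b h l).sub (rotC b h m) := by
  intro i
  simp only [rotC]
  split_ifs
  · exact Nat.sub_le_sub_left (hml _) b
  · exact le_rfl

lemma rotC_emptyP (b h : ℕ) : rotC b h emptyP = rect b h := rfl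

lemma rotC_rect_part (b h i : ℕ) : (rotC b h (rect b h)).part i = 0 := by
  simp only [rotC, rect]
  split_ifs <;> omega

lemma cMix'_eq_one_of_part_eq_zero (l : JPartition) {m : JPartition} (hm : ∀ i, m.part i = 0) :
    cMix' l m = 1 := by
  simp [cMix', boxProdM, hm]

lemma boxProdM_eq_prod_range {M : Type*} [CommMonoid M] {l : JPartition} {h : ℕ}
    (hlh : l.part h = 0) (f : ℕ × ℕ → M) :
    boxProdM l f = ∏ i ∈ range h, ∏ j ∈ range (l.part i), f (i, j) := by
  refine finprod_eq_prod_of_mulSupport_subset _ fun i hi => ?_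
  by_contra hih
  simp only [coe_range, Set.mem_Iio, not_lt] at hih
  simp [JPartition.part_eq_zero_of_le_s5 hlh hih] at hi

lemma natCast_mul_alpha_add_ne_zero {q : ℕ} (c : ℕ) (hq : q ≠ 0) :
    (q : K) * alpha + c ≠ 0 := by
  have hpoly : (q : K) * alpha + c =
      algebraMap (Polynomial ℚ) K (Polynomial.C (q : ℚ) * Polynomial.X + Polynomial.C (c : ℚ)) := by
    simp [alpha, RatFunc.algebraMap_X]
  rw [hpoly]
  refine RatFunc.algebraMap_ne_zero fun h0 => hq ?_
  simpa using congrArg (Polynomial.coeff · 1) h0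

def alphaFactorial (n c : ℕ) : K := ∏ t ∈ range n, ((t + 1 : ℕ) * alpha + c)

lemma alphaFactorial_ne_zero (n c : ℕ) : alphaFactorial n c ≠ 0 :=
  prod_ne_zero_iff.2 fun _ _ => natCast_mul_alpha_add_ne_zero c (Nat.succ_ne_zero _)

lemma prod_Ico_mul_alphaFactorial (L c : ℕ) {u v : ℕ} (huv : u ≤ v) (hvL : v ≤ L) :
    (∏ j ∈ Ico u v, ((L - j : ℕ) * alpha + c)) * alphaFactorial (L - v) c =
      alphaFactorial (L - u) c := by
  induction v, huv using Nat.le_induction with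
  | base => simp
  | succ v huv ih =>
    have hsplit : alphaFactorial (L - v) c =
        alphaFactorial (L - (v + 1)) c * ((L - v : ℕ) * alpha + c) := by
      rw [alphaFactorial, show L - v = L - (v + 1) + 1 by omega, prod_range_succ]
      rfl
    rw [prod_Ico_succ_top huv, ← ih (by omega), hsplit]
    ring

lemma arm_leg_factor_eq {l m : JPartition} {i j k : ℕ} (hjl : j < l.part i) (hik : i ≤ k)
    (hle : m.part (k + 1) ≤ j) (hlt : j < m.part k) :
    ((l.arm (i, j) : K) + 1) * alpha + (m.leg (i, j) : K) =
      ((l.part i - j : ℕ) : K) * alpha + ((k - i : ℕ) : K) := by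
  simp only [JPartition.arm, JPartition.leg, JPartition.conjPart_eq_succ hle hlt]
  push_cast [Nat.cast_sub hjl.le, Nat.cast_sub hik]
  ring

lemma prod_row_mul_prod_alphaFactorial {l m : JPartition} (hml : m.sub l) {i n : ℕ} (hin : i ≤ n) :
    (∏ j ∈ Ico (m.part n) (m.part i), (((l.arm (i, j) : K) + 1) * alpha + (m.leg (i, j) : K))) *
        ∏ k ∈ Ico i n, alphaFactorial (l.part i - m.part k) (k - i) =
      ∏ k ∈ Ico i n, alphaFactorial (l.part i - m.part (k + 1)) (k - i) := by
  induction n, hin using Nat.le_induction with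
  | base => simp
  | succ n hin ih =>
    have hmn : m.part n ≤ l.part i := (m.antitone' hin).trans (hml i)
    have hcol : ∏ j ∈ Ico (m.part (n + 1)) (m.part n),
        (((l.arm (i, j) : K) + 1) * alpha + (m.leg (i, j) : K)) =
          ∏ j ∈ Ico (m.part (n + 1)) (m.part n),
            (((l.part i - j : ℕ) : K) * alpha + ((n - i : ℕ) : K)) :=
      prod_congr rfl fun j hj => by
        rw [mem_Ico] at hj
        exact arm_leg_factor_eq (hj.2.trans_le hmn) hin hj.1 hj.2
    rw [prod_Ico_succ_top hin, prod_Ico_succ_top hin, ← ih,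
      ← prod_Ico_consecutive _ (m.antitone' n.le_succ) (m.antitone' hin), hcol,
      ← prod_Ico_mul_alphaFactorial _ _ (m.antitone' n.le_succ) hmn]
    ring

def pairProd (l m : ℕ → ℕ) (h d : ℕ) : K :=
  ∏ p ∈ range h, ∏ q ∈ Ico (p + d) h, alphaFactorial (l p - m q) (q - (p + d))

def rowProd (l : ℕ → ℕ) (h : ℕ) : K :=
  ∏ p ∈ range h, alphaFactorial (l p) (h - (p + 1))

lemma pairProd_ne_zero (l m : ℕ → ℕ) (h d : ℕ) : pairProd l m h d ≠ 0 :=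
  prod_ne_zero_iff.2 fun _ _ => prod_ne_zero_iff.2 fun _ _ => alphaFactorial_ne_zero _ _

lemma rowProd_ne_zero (l : ℕ → ℕ) (h : ℕ) : rowProd l h ≠ 0 :=
  prod_ne_zero_iff.2 fun _ _ => alphaFactorial_ne_zero _ _

lemma cMix'_mul_pairProd {l m : JPartition} {h : ℕ} (hml : m.sub l) (hmh : m.part h = 0) :
    cMix' l m * pairProd l.part m.part h 0 = pairProd l.part m.part h 1 * rowProd l.part h := by
  rw [cMix', boxProdM_eq_prod_range hmh, pairProd, pairProd, rowProd, ← prod_mul_distrib,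
    ← prod_mul_distrib]
  refine prod_congr rfl fun i hi => ?_
  have hih : i + 1 ≤ h := mem_range.1 hi
  have hrow := prod_row_mul_prod_alphaFactorial hml (Nat.le_of_succ_le hih)
  rw [hmh, ← range_eq_Ico] at hrow
  simp only [add_zero]
  have hshift := prod_Ico_add' (fun q => alphaFactorial (l.part i - m.part q) (q - (i + 1))) i h 1
  simp only [Nat.add_sub_add_right] at hshift
  rw [hrow, hshift, prod_Ico_succ_top hih, hmh, Nat.sub_zero]

lemma prod_triangle_reflect {M : Type*} [CommMonoid M] (h d : ℕ) (F : ℕ → ℕ → M) :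
    ∏ p ∈ range h, ∏ q ∈ Ico (p + d) h, F p q =
      ∏ p ∈ range h, ∏ q ∈ Ico (p + d) h, F (h - 1 - q) (h - 1 - p) := by
  rw [prod_sigma', prod_sigma']
  refine prod_nbij' (fun x => ⟨h - 1 - x.2, h - 1 - x.1⟩) (fun x => ⟨h - 1 - x.2, h - 1 - x.1⟩)
    ?_ ?_ ?_ ?_ ?_ <;> rintro ⟨p, q⟩ hpq
  all_goals simp only [mem_sigma, mem_range, mem_Ico, Sigma.mk.injEq, heq_eq_eq] at hpq ⊢
  iterate 4 omega
  congr 1 <;> omega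

lemma pairProd_rotC {b h : ℕ} {l m : JPartition} (hml : m.sub l) (hl : l.sub (rect b h)) (d : ℕ) :
    pairProd (rotC b h m).part (rotC b h l).part h d = pairProd l.part m.part h d := by
  rw [pairProd, prod_triangle_reflect]
  refine prod_congr rfl fun p hp => prod_congr rfl fun q hq => ?_
  rw [mem_range] at hp
  rw [mem_Ico] at hq
  have hlb : l.part p ≤ b := by simpa [rect, hp] using hl p
  have hmq : m.part q ≤ l.part p := (hml q).trans (l.antitone' (by omega))
  rw [rotC_part_of_lt _ (by omega), rotC_part_of_lt _ (by omega),
    show h - 1 - (h - 1 - q) = q by omega, show h - 1 - (h - 1 - p) = p by omega]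
  congr 1 <;> omega

lemma cMix'_mul_rowProd_rotC {b h : ℕ} {l m : JPartition} (hml : m.sub l)
    (hl : l.sub (rect b h)) :
    cMix' l m * rowProd (rotC b h m).part h =
      cMix' (rotC b h m) (rotC b h l) * rowProd l.part h := by
  have hmh : m.part h = 0 := Nat.eq_zero_of_le_zero (by simpa [rect] using (hml h).trans (hl h))
  have hpairs := cMix'_mul_pairProd hml hmh
  have hrotPairs := cMix'_mul_pairProd (rotC_sub_rotC (b := b) (h := h) hml)
    (if_neg (lt_irrefl h))
  rw [pairProd_rotC hml hl, pairProd_rotC hml hl] at hrotPairs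
  apply mul_right_cancel₀ (pairProd_ne_zero l.part m.part h 0)
  linear_combination rowProd (rotC b h m).part h * hpairs - rowProd l.part h * hrotPairs

end

/-- For `μ ⊆ λ ⊆ β = (b^h)` with rotated complements `λ̂ ⊆ μ̂ ⊆ β`:
`c'_{λ,μ}(α)/c'_{β,μ}(α) = c'_{μ̂,λ̂}(α)/c'_{β,λ̂}(α)`. -/
theorem stmt5 (b h : ℕ) (l m : JPartition) (h1 : m.sub l) (h2 : l.sub (rect b h)) :
    cMix' l m / cMix' (rect b h) m =
      cMix' (rotC b h m) (rotC b h l) / cMix' (rect b h) (rotC b h l) := by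
  have hlm := cMix'_mul_rowProd_rotC h1 h2
  have hrect := cMix'_mul_rowProd_rotC (h1.trans h2) (rect b h).sub_refl
  have hempty := cMix'_mul_rowProd_rotC (emptyP_sub l) h2
  rw [cMix'_eq_one_of_part_eq_zero _ (rotC_rect_part b h), one_mul] at hrect
  rw [cMix'_eq_one_of_part_eq_zero _ (fun _ => rfl), one_mul, rotC_emptyP] at hempty
  have hA_m := rowProd_ne_zero (rotC b h m).part h
  have hA_l := rowProd_ne_zero l.part h
  have hA_rect := rowProd_ne_zero (rect b h).part h
  rw [div_eq_div_iff (left_ne_zero_of_mul (hrect ▸ hA_rect))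
    (left_ne_zero_of_mul (hempty ▸ hA_rect))]
  apply mul_right_cancel₀ (mul_ne_zero hA_m hA_l)
  linear_combination (cMix' (rect b h) (rotC b h l) * rowProd l.part h) * hlm
    - (cMix' (rotC b h m) (rotC b h l) * rowProd l.part h) * hrect
    - (cMix' (rotC b h m) (rotC b h l) * rowProd l.part h) * hempty
end
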